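/- Let A be a finite-dimensional semisimple algebra of dimension n over a field k of characteristic 0. Then every k-linear derivation of A is inner (of the form b ↦ ab − ba for some a ∈ A), and consequently dim_k Der_k(A) = n − dim_k Z(A), where Z(A) is the center of A. -/

import Mathlib

/-!
The trace form `τ(a, b) = tr(x ↦ a b x)` is symmetric and associative. For `A` semisimple in
characteristic zero it is nondegenerate: its radical is a left ideal, hence generated by an
idempotent `e`, and left multiplication by `e` is a projection of trace `τ(e, 1) = 0`, so `e = 0`.

Let `(bᵢ)` be a basis and `(yᵢ)` its `τ`-dual basis. Pairing with any `z` shows `∑ bᵢ yᵢ = 1`,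
since both sides give `tr(x ↦ z x)`, and associativity gives the Casimir identity
`∑ a bᵢ ⊗ yᵢ = ∑ bᵢ ⊗ yᵢ a`. Applying `u ⊗ v ↦ D(u) v` to it shows that a derivation `D` is the
inner derivation `[m, ·]` with `m = ∑ D(bᵢ) yᵢ`. The dimension formula is then rank–nullity for
`m ↦ [m, ·]`, whose kernel is the centre.
-/

/-- The space `Der_k(A)` of `k`-linear derivations of `A`, as a `k`-submodule of
`End_k(A)`. -/
def derModule (k A : Type*) [Field k] [Ring A] [Algebra k A] :
    Submodule k (A →ₗ[k] A) where
  carrier := {D | ∀ a b : A, D (a * b) = D a * b + a * D b}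
  zero_mem' := by intro a b; simp
  add_mem' := by
    intro D E hD hE a b
    simp only [LinearMap.add_apply, hD a b, hE a b, mul_add, add_mul]
    abel
  smul_mem' := by
    intro s D hD a b
    simp only [LinearMap.smul_apply, hD a b, Algebra.mul_smul_comm, Algebra.smul_mul_assoc,
      smul_add]

open LinearMap

namespace LinearMap.BilinForm

variable {k ι : Type*} [Field k] [Fintype ι] [DecidableEq ι]

lemma repr_apply_eq_apply_dualBasis {V : Type*} [AddCommGroup V] [Module k V]
    {B : LinearMap.BilinForm k V} (hB : B.Nondegenerate) (hBs : B.IsSymm)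
    (b : Module.Basis ι k V) (z : V) (i : ι) :
    b.repr z i = B z (B.dualBasis hB b i) := by
  simpa [dualBasis_dualBasis hB hBs] using dualBasis_repr_apply hB (B.dualBasis hB b) z i

lemma sum_apply_mul_dualBasis_eq {A M : Type*} [Ring A] [Algebra k A] [AddCommGroup M]
    [Module k M] {B : LinearMap.BilinForm k A} (hB : B.Nondegenerate) (hBs : B.IsSymm)
    (hBa : ∀ x y z : A, B (x * y) z = B x (y * z)) (b : Module.Basis ι k A)
    (φ : A →ₗ[k] A →ₗ[k] M) (a : A) :
    ∑ i, φ (a * b i) (B.dualBasis hB b i) = ∑ i, φ (b i) (B.dualBasis hB b i * a) := by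
  set y := B.dualBasis hB b
  calc ∑ i, φ (a * b i) (y i)
      = ∑ i, ∑ j, B (a * b i) (y j) • φ (b j) (y i) := by
        refine Finset.sum_congr rfl fun i _ => ?_
        conv_lhs => rw [← b.sum_repr (a * b i)]
        simp [repr_apply_eq_apply_dualBasis hB hBs b, y]
    _ = ∑ j, ∑ i, B (y j * a) (b i) • φ (b j) (y i) := by
        rw [Finset.sum_comm]
        simp only [hBs.eq (a * _), hBa]
    _ = ∑ j, φ (b j) (y j * a) := by
        refine Finset.sum_congr rfl fun j _ => ?_
        conv_rhs => rw [← y.sum_repr (y j * a)]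
        simp [y]

end LinearMap.BilinForm

section TraceForm

variable (k A : Type*) [CommRing k] [Ring A] [Algebra k A]

noncomputable def regularTraceForm : LinearMap.BilinForm k A :=
  (LinearMap.mul k A).compr₂ ((LinearMap.trace k A).comp (Algebra.lmul k A).toLinearMap)

noncomputable def innerDer : A →ₗ[k] A →ₗ[k] A :=
  LinearMap.mul k A - (LinearMap.mul k A).flip

variable {k A}

lemma regularTraceForm_apply (a b : A) :
    regularTraceForm k A a b = trace k A (Algebra.lmul k A (a * b)) := rfl

lemma regularTraceForm_isSymm : (regularTraceForm k A).IsSymm :=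
  ⟨fun a b => by simpa only [regularTraceForm_apply, map_mul] using trace_mul_comm k _ _⟩

lemma regularTraceForm_mul_left (a b c : A) :
    regularTraceForm k A (a * b) c = regularTraceForm k A a (b * c) := by
  simp only [regularTraceForm_apply, mul_assoc]

lemma innerDer_apply (m a : A) : innerDer k A m a = m * a - a * m := rfl

end TraceForm

section Derivations

variable {k A : Type*} [Field k] [Ring A] [Algebra k A]

theorem regularTraceForm_nondegenerate [CharZero k] [FiniteDimensional k A]
    [IsSemisimpleRing A] : (regularTraceForm k A).Nondegenerate := by
  set τ := regularTraceForm k A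
  let radical : Ideal A :=
    { carrier := {x | ∀ a, τ x a = 0}
      add_mem' := fun hx hy a => by simp [hx a, hy a]
      zero_mem' := fun a => by simp
      smul_mem' := fun c x hx a => by
        rw [smul_eq_mul, regularTraceForm_mul_left, regularTraceForm_isSymm.eq,
          regularTraceForm_mul_left]
        exact hx _ }
  obtain ⟨e, he, hspan⟩ := IsSemisimpleRing.ideal_eq_span_idempotent radical
  have he_rad : e ∈ radical := hspan ▸ Ideal.subset_span rfl
  have hLe : Algebra.lmul k A e = 0 :=
    (he.map (Algebra.lmul k A)).eq_zero_of_trace_eq_zero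
      (by simpa [τ, regularTraceForm_apply] using he_rad 1)
  have he0 : e = 0 := by simpa using congr($hLe 1)
  refine (IsRefl.nondegenerate_iff_separatingLeft (B := τ)
    regularTraceForm_isSymm.isRefl).mpr fun x hx => ?_
  have hx_rad : x ∈ radical := hx
  simpa [hspan, he0] using hx_rad

lemma sum_mul_dualBasis_regularTraceForm_eq_one {ι : Type*} [Fintype ι] [DecidableEq ι]
    (hτ : (regularTraceForm k A).Nondegenerate) (b : Module.Basis ι k A) :
    ∑ i, b i * (regularTraceForm k A).dualBasis hτ b i = 1 := by
  set τ := regularTraceForm k A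
  refine sub_eq_zero.mp (hτ.2 _ fun z => ?_)
  have htrace : τ z 1 = ∑ i, b.repr (z * b i) i := by
    rw [regularTraceForm_apply, mul_one, trace_eq_matrix_trace k b, Matrix.trace]
    simp [LinearMap.toMatrix_apply]
  simp [htrace, map_sum, ← regularTraceForm_mul_left,
    BilinForm.repr_apply_eq_apply_dualBasis hτ regularTraceForm_isSymm b, τ]

theorem exists_eq_mul_sub_mul_of_regularTraceForm_nondegenerate [FiniteDimensional k A]
    (hτ : (regularTraceForm k A).Nondegenerate) (D : A →ₗ[k] A)
    (hD : ∀ a b : A, D (a * b) = D a * b + a * D b) :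
    ∃ m : A, ∀ a : A, D a = m * a - a * m := by
  set b := Module.finBasis k A
  set y := (regularTraceForm k A).dualBasis hτ b
  refine ⟨∑ i, D (b i) * y i, fun a => eq_sub_of_add_eq ?_⟩
  calc D a + a * ∑ i, D (b i) * y i
      = ∑ i, D (a * b i) * y i := by
        simp only [hD, add_mul, Finset.sum_add_distrib, mul_assoc, ← Finset.mul_sum,
          sum_mul_dualBasis_regularTraceForm_eq_one, mul_one, y]
    _ = ∑ i, D (b i) * (y i * a) :=
        BilinForm.sum_apply_mul_dualBasis_eq hτ regularTraceForm_isSymm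
          regularTraceForm_mul_left b (LinearMap.mul k A ∘ₗ D) a
    _ = (∑ i, D (b i) * y i) * a := by simp only [Finset.sum_mul, mul_assoc]

lemma range_innerDer_le_derModule : range (innerDer k A) ≤ derModule k A := by
  rintro _ ⟨m, rfl⟩ a b
  simp only [innerDer_apply]
  noncomm_ring

lemma ker_innerDer_eq_center :
    ker (innerDer k A) = Subalgebra.toSubmodule (Subalgebra.center k A) := by
  ext m
  simp [LinearMap.ext_iff, innerDer_apply, Subalgebra.mem_center_iff, sub_eq_zero, eq_comm]

lemma range_innerDer_eq_derModule [FiniteDimensional k A]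
    (hτ : (regularTraceForm k A).Nondegenerate) : range (innerDer k A) = derModule k A := by
  refine range_innerDer_le_derModule.antisymm fun D hD => ?_
  obtain ⟨m, hm⟩ := exists_eq_mul_sub_mul_of_regularTraceForm_nondegenerate hτ D hD
  exact ⟨m, LinearMap.ext fun a => by rw [innerDer_apply, hm]⟩

lemma finrank_derModule_add_finrank_center [FiniteDimensional k A]
    (hτ : (regularTraceForm k A).Nondegenerate) :
    Module.finrank k (derModule k A) + Module.finrank k (Subalgebra.center k A) =
      Module.finrank k A := by
  rw [← range_innerDer_eq_derModule hτ, ← Subalgebra.finrank_toSubmodule,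
    ← ker_innerDer_eq_center]
  exact finrank_range_add_finrank_ker _

end Derivations

/-- for a finite-dimensional semisimple algebra `A` of dimension `n` over a
field `k` of characteristic 0, every `k`-linear derivation of `A` is inner, and
consequently `dim_k Der_k(A) = n − dim_k Z(A)` where `Z(A)` is the center of `A`. -/
theorem stmt_6 {k : Type*} [Field k] [CharZero k] {A : Type*} [Ring A] [Algebra k A]
    [FiniteDimensional k A] [IsSemisimpleRing A] {n : ℕ} (hn : Module.finrank k A = n) :
    (∀ D : A →ₗ[k] A, (∀ a b : A, D (a * b) = D a * b + a * D b) →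
      ∃ a : A, ∀ b : A, D b = a * b - b * a) ∧
    Module.finrank k (derModule k A) = n - Module.finrank k (Subalgebra.center k A) := by
  have hτ : (regularTraceForm k A).Nondegenerate := regularTraceForm_nondegenerate
  refine ⟨exists_eq_mul_sub_mul_of_regularTraceForm_nondegenerate hτ, ?_⟩
  have := finrank_derModule_add_finrank_center hτ
  omega
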